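/- Let p be a prime and G a finite p-group. Let u_1,…,u_n be group words in variables x_1,…,x_n of the form u_i = x_i^{m_i} v_i, where each v_i is a word depending only on the variables x_{i+1},…,x_n, and each exponent m_i is coprime to p. Then the map f_{u_1,…,u_n} : G^n → G^n, (g_1,…,g_n) ↦ (u_1(g_1,…,g_n),…,u_n(g_1,…,g_n)), is bijective. -/

import Mathlib

/-!
Since `v_i` involves only `x_{i+1}, …, x_n`, two tuples with the same image that agree in the
coordinates after `i` give the same value of `v_i`, so cancelling yields `g_i ^ m_i = g'_i ^ m_i`;
as `m_i` is prime to `p`, powering by `m_i` is injective on a `p`-group, so `g_i = g'_i`.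
Downward induction on `i` gives injectivity, hence bijectivity since `G^n` is finite.
-/

open Function

theorem injective_of_eq_of_forall_gt_eq {ι α β : Type*} [Preorder ι] [WellFoundedGT ι]
    {F : (ι → α) → ι → β}
    (hF : ∀ g g' i, (∀ j, i < j → g j = g' j) → F g i = F g' i → g i = g' i) :
    Injective F := by
  intro g g' h
  funext i
  induction i using WellFoundedGT.induction with
  | _ i ih => exact hF g g' i ih (congrFun h i)

theorem FreeGroup.lift_eq_lift_of_mem_closure {α G : Type*} [Group G] {g g' : α → G} {s : Set α}
    {w : FreeGroup α} (hw : w ∈ Subgroup.closure (FreeGroup.of '' s)) (h : Set.EqOn g g' s) :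
    FreeGroup.lift g w = FreeGroup.lift g' w :=
  MonoidHom.eqOn_closure (by rintro _ ⟨a, ha, rfl⟩; simpa using h ha) hw

theorem IsPGroup.zpow_injective {p : ℕ} {G : Type*} [Group G] (hG : IsPGroup p G) {m : ℤ}
    (hm : IsCoprime m p) : Injective (fun g : G => g ^ m) := by
  have hcop : p.Coprime m.natAbs := by
    simpa [Nat.coprime_comm, Int.gcd] using Int.isCoprime_iff_gcd_eq_one.mp hm
  have hpow : Injective (fun g : G => g ^ m.natAbs) := (hG.powEquiv hcop).injective
  rcases Int.natAbs_eq m with hm' | hm' <;> rw [hm']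
  · simpa only [zpow_natCast] using hpow
  · simpa only [zpow_neg, zpow_natCast, comp_def] using inv_injective.comp hpow

theorem substitution_map_bijective_general
    (p : ℕ) {G : Type*} [Group G] [Finite G]
    (hpG : IsPGroup p G) (n : ℕ)
    (m : Fin n → ℤ) (hm : ∀ i, IsCoprime (m i) (p : ℤ))
    (v : Fin n → FreeGroup (Fin n))
    (hv : ∀ i, v i ∈ Subgroup.closure (FreeGroup.of '' {j : Fin n | i < j}))
    (u : Fin n → FreeGroup (Fin n))
    (hu : ∀ i, u i = FreeGroup.of i ^ (m i) * v i) :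
    Function.Bijective
      (fun g : Fin n → G => fun i => FreeGroup.lift g (u i)) := by
  refine Finite.injective_iff_bijective.mp
    (injective_of_eq_of_forall_gt_eq fun g g' i hagree himage => ?_)
  have hvi := FreeGroup.lift_eq_lift_of_mem_closure (hv i) (g := g) (g' := g') hagree
  simp only [hu i, map_mul, map_zpow, FreeGroup.lift_apply_of, hvi] at himage
  exact hpG.zpow_injective (hm i) (mul_right_cancel himage)

/-- In a finite `p`-group, if `u_i = x_i^{m_i} v_i` with `(m_i, p) = 1` and `v_i`
a word only in the variables `x_{i+1},…,x_n`, then the substitution map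
`f_{u_1,…,u_n} : G^n → G^n` is bijective. -/
theorem substitution_map_bijective
    (p : ℕ) (hp : p.Prime) {G : Type*} [Group G] [Finite G]
    (hpG : IsPGroup p G) (n : ℕ)
    (m : Fin n → ℤ) (hm : ∀ i, IsCoprime (m i) (p : ℤ))
    (v : Fin n → FreeGroup (Fin n))
    (hv : ∀ i, v i ∈ Subgroup.closure (FreeGroup.of '' {j : Fin n | i < j}))
    (u : Fin n → FreeGroup (Fin n))
    (hu : ∀ i, u i = FreeGroup.of i ^ (m i) * v i) :
    Function.Bijective
      (fun g : Fin n → G => fun i => FreeGroup.lift g (u i)) :=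
  substitution_map_bijective_general p hpG n m hm v hv u hu
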